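/- Riemann problem for the limit model, congested case: let ρ_L > ρ_max and 0 ≤ ρ_R ≤ ρ_max, and define ρ₀(x) = ρ_L for x < 0 and ρ₀(x) = ρ_R for x > 0. Then the function ρ(t,x) defined for t > 0 by ρ(t,x) = ρ_L for x < 0, ρ(t,x) = ρ_max for 0 < x < v·t, and ρ(t,x) = ρ_R for x > v·t, is an entropy weak solution of ∂_t ρ + ∂_x f(ρ) = 0 with f(s) = v · min(s, ρ_max) and initial datum ρ₀; that is, for every κ ∈ ℝ and every nonnegative φ ∈ C¹_c([0,∞) × ℝ): 0 ≤ ∫₀^∞ ∫_ℝ ( |ρ − κ| ∂_t φ + sgn(ρ − κ)( f(ρ) − f(κ) ) ∂_x φ ) dx dt + ∫_ℝ |ρ₀(x) − κ| φ(0,x) dx. -/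

import Mathlib

open MeasureTheory Filter Set

lemma sign_mul_self_eq_abs (x : ℝ) : Real.sign x * x = |x| := by
  rcases lt_trichotomy x 0 with h | h | h
  · rw [Real.sign_of_neg h, abs_of_neg h]; ring
  · simp [h]
  · rw [Real.sign_of_pos h, abs_of_pos h]; ring

lemma real_sign_mono {x y : ℝ} (h : x ≤ y) : Real.sign x ≤ Real.sign y := by
  rcases lt_trichotomy x 0 with hx | hx | hx <;>
    rcases lt_trichotomy y 0 with hy | hy | hy <;>
      simp_all [Real.sign_of_neg, Real.sign_of_pos, Real.sign_zero] <;> linarith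

lemma hcs_line {f : ℝ × ℝ → ℝ} (hf : HasCompactSupport f) {L : ℝ → ℝ × ℝ}
    {π : ℝ × ℝ → ℝ} (hπ : Continuous π) (h : ∀ t, π (L t) = t) :
    HasCompactSupport (fun t => f (L t)) := by
  apply HasCompactSupport.intro (hf.image hπ)
  intro t ht
  by_contra h0
  exact ht ⟨L t, subset_tsupport _ (Function.mem_support.mpr h0), h t⟩

lemma cs_integral_Ioo {g : ℝ → ℝ} (hg : ContDiff ℝ 1 g) {a b : ℝ} (hab : a ≤ b) :
    ∫ x in Ioo a b, deriv g x = g b - g a := by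
  rw [← integral_Ioc_eq_integral_Ioo, ← intervalIntegral.integral_of_le hab]
  exact intervalIntegral.integral_deriv_eq_sub
    (fun x _ => (hg.differentiable one_ne_zero).differentiableAt)
    ((hg.continuous_deriv le_rfl).intervalIntegrable _ _)

lemma cs_integral_Ioc {g : ℝ → ℝ} (hg : ContDiff ℝ 1 g) {a b : ℝ} (hab : a ≤ b) :
    ∫ x in Ioc a b, deriv g x = g b - g a := by
  rw [integral_Ioc_eq_integral_Ioo]; exact cs_integral_Ioo hg hab

lemma cs_integral_Iio {g : ℝ → ℝ} (hg : ContDiff ℝ 1 g) (h2 : HasCompactSupport g) (b : ℝ) :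
    ∫ x in Iio b, deriv g x = g b := by
  rw [← integral_Iic_eq_integral_Iio]
  exact h2.integral_Iic_deriv_eq hg b

lemma cs_integral_Ici {g : ℝ → ℝ} (hg : ContDiff ℝ 1 g) (h2 : HasCompactSupport g) (b : ℝ) :
    ∫ x in Ici b, deriv g x = - g b := by
  rw [integral_Ici_eq_integral_Ioi]
  exact h2.integral_Ioi_deriv_eq hg b

lemma disj_Ioo_Ici {a b : ℝ} : Disjoint (Ioo a b) (Ici b) := by
  rw [Set.disjoint_left]
  rintro y ⟨_, h2⟩ h3
  exact absurd h3 (not_le.mpr h2)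

set_option maxHeartbeats 2000000 in
/-- Riemann problem for the limit model, congested case: for
`ρ_L > ρ_max`, `0 ≤ ρ_R ≤ ρ_max` and Riemann datum `ρ₀`, the function given for
`t > 0` by `ρ(t,x) = ρ_L` for `x < 0`, `ρ(t,x) = ρ_max` for `0 < x < v t`, and
`ρ(t,x) = ρ_R` for `x > v t`, is an entropy weak solution of `∂_t ρ + ∂_x f(ρ) = 0`
with `f(s) = v min(s, ρ_max)`. -/
theorem stmt_19
    (v ρmax : ℝ) (hv : 0 < v) (hρmax : 0 < ρmax)
    (ρL ρR : ℝ) (hρL : ρmax < ρL) (hρR : ρR ∈ Set.Icc 0 ρmax)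
    (f : ℝ → ℝ) (hf : ∀ s : ℝ, f s = v * min s ρmax)
    (ρ₀ : ℝ → ℝ) (hρ₀ : ∀ x : ℝ, ρ₀ x = if x < 0 then ρL else ρR)
    (ρ : ℝ → ℝ → ℝ)
    (hρ : ∀ t x : ℝ, 0 < t →
      ρ t x = if x < 0 then ρL else if x < v * t then ρmax else ρR) :
    ∀ κ : ℝ, ∀ φ : ℝ → ℝ → ℝ,
      ContDiff ℝ 1 (Function.uncurry φ) → HasCompactSupport (Function.uncurry φ) →
      (∀ t x : ℝ, 0 ≤ φ t x) →
      0 ≤ (∫ t in Set.Ioi (0 : ℝ), ∫ x : ℝ,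
            (|ρ t x - κ| * deriv (fun s => φ s x) t
              + Real.sign (ρ t x - κ) * (f (ρ t x) - f κ)
                * deriv (fun y => φ t y) x))
          + ∫ x : ℝ, |ρ₀ x - κ| * φ 0 x := by
  intro κ φ hφ hsupp hpos
  -- abbreviations
  set Φ : ℝ × ℝ → ℝ := Function.uncurry φ with hΦ
  have hΦc : Continuous Φ := hφ.continuous
  -- constants
  set aa : ℝ := |ρL - κ| with haa
  set bb : ℝ := |ρmax - κ| with hbb
  set cc : ℝ := |ρR - κ| with hcc
  set FA : ℝ := Real.sign (ρL - κ) * (f ρL - f κ) with hFA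
  set FB : ℝ := Real.sign (ρmax - κ) * (f ρmax - f κ) with hFB
  set FC : ℝ := Real.sign (ρR - κ) * (f ρR - f κ) with hFC
  -- flux values
  have hfρL : f ρL = v * ρmax := by rw [hf, min_eq_right hρL.le]
  have hfρmax : f ρmax = v * ρmax := by rw [hf, min_self]
  have hfρR : f ρR = v * ρR := by rw [hf, min_eq_left hρR.2]
  have hfκle : f κ ≤ v * ρmax := by
    rw [hf]; exact mul_le_mul_of_nonneg_left (min_le_right _ _) hv.le
  -- key algebraic facts
  have hK1 : FB ≤ FA := by
    rw [hFA, hFB, hfρL, hfρmax]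
    exact mul_le_mul_of_nonneg_right (real_sign_mono (by linarith)) (by linarith)
  have hK2 : v * cc + FB = v * bb + FC := by
    rcases le_or_gt κ ρmax with h | h
    · have hfκ : f κ = v * κ := by rw [hf, min_eq_left h]
      have h1 : FB = v * bb := by
        rw [hFB, hfρmax, hfκ, hbb,
          show Real.sign (ρmax - κ) * (v * ρmax - v * κ)
            = v * (Real.sign (ρmax - κ) * (ρmax - κ)) by ring,
          sign_mul_self_eq_abs]
      have h2 : FC = v * cc := by
        rw [hFC, hfρR, hfκ, hcc,
          show Real.sign (ρR - κ) * (v * ρR - v * κ)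
            = v * (Real.sign (ρR - κ) * (ρR - κ)) by ring,
          sign_mul_self_eq_abs]
      linarith
    · have hfκ : f κ = v * ρmax := by rw [hf, min_eq_right h.le]
      have hFB0 : FB = 0 := by rw [hFB, hfρmax, hfκ]; ring
      have hsgn : Real.sign (ρR - κ) = -1 := Real.sign_of_neg (by linarith [hρR.2])
      have hFCe : FC = v * (ρmax - ρR) := by rw [hFC, hfρR, hfκ, hsgn]; ring
      have hbbe : bb = κ - ρmax := by rw [hbb, abs_of_nonpos (by linarith)]; ring
      have hcce : cc = κ - ρR := by rw [hcc, abs_of_nonpos (by linarith [hρR.2])]; ring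
      rw [hFB0, hFCe, hbbe, hcce]; ring
  have haange : 0 ≤ aa := abs_nonneg _
  have hbbnge : 0 ≤ bb := abs_nonneg _
  have hccnge : 0 ≤ cc := abs_nonneg _
  -- slices of φ
  have sliceT : ∀ x : ℝ, ContDiff ℝ 1 (fun s => φ s x) :=
    fun x => hφ.comp (contDiff_id.prodMk contDiff_const)
  have sliceTsupp : ∀ x : ℝ, HasCompactSupport (fun s => φ s x) :=
    fun x => hcs_line (L := fun s => (s, x)) hsupp continuous_fst (fun t => rfl)
  have sliceX : ∀ t : ℝ, ContDiff ℝ 1 (fun y => φ t y) :=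
    fun t => hφ.comp (contDiff_const.prodMk contDiff_id)
  have sliceXsupp : ∀ t : ℝ, HasCompactSupport (fun y => φ t y) :=
    fun t => hcs_line (L := fun y => (t, y)) hsupp continuous_snd (fun x => rfl)
  -- fderiv
  set D : ℝ × ℝ → (ℝ × ℝ) →L[ℝ] ℝ := fderiv ℝ Φ with hD
  have hDc : Continuous D := hφ.continuous_fderiv one_ne_zero
  have hdt : ∀ t x : ℝ, HasDerivAt (fun s => φ s x) (D (t, x) (1, 0)) t := by
    intro t x
    exact ((hφ.differentiable one_ne_zero (t, x)).hasFDerivAt).comp_hasDerivAt t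
      ((hasDerivAt_id t).prodMk (hasDerivAt_const t x))
  have edt : ∀ t x : ℝ, deriv (fun s => φ s x) t = D (t, x) (1, 0) :=
    fun t x => (hdt t x).deriv
  set ψt : ℝ × ℝ → ℝ := fun p => D p (1, 0) with hψt
  have hψtc : Continuous ψt := hDc.clm_apply continuous_const
  have hψtcs : HasCompactSupport ψt := hsupp.fderiv_apply ℝ (1, 0)
  have hψti : Integrable ψt := hψtc.integrable_of_hasCompactSupport hψtcs
  -- piecewise coefficient functions
  set Q : ℝ × ℝ → ℝ := fun p => if p.2 < 0 then aa else if p.2 < v * p.1 then bb else cc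
    with hQ
  set FF : ℝ × ℝ → ℝ := fun p => if p.2 < 0 then FA else if p.2 < v * p.1 then FB else FC
    with hFF
  set H : ℝ × ℝ → ℝ := fun p => (if 0 < p.1 then Q p else 0) * ψt p with hH
  have hQm : Measurable Q := by
    rw [hQ]
    exact Measurable.ite (measurableSet_lt measurable_snd measurable_const) measurable_const
      (Measurable.ite (measurableSet_lt measurable_snd (measurable_fst.const_mul v))
        measurable_const measurable_const)
  have hFFm : Measurable FF := by
    rw [hFF]
    exact Measurable.ite (measurableSet_lt measurable_snd measurable_const) measurable_const
      (Measurable.ite (measurableSet_lt measurable_snd (measurable_fst.const_mul v))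
        measurable_const measurable_const)
  set M : ℝ := max aa (max bb cc) with hM
  have hQb : ∀ p : ℝ × ℝ, ‖Q p‖ ≤ M := by
    intro p
    simp only [hQ, Real.norm_eq_abs]
    split_ifs
    · rw [haa, abs_abs]; exact le_max_left _ _
    · rw [hbb, abs_abs]; exact le_trans (le_max_left _ _) (le_max_right _ _)
    · rw [hcc, abs_abs]; exact le_trans (le_max_right _ _) (le_max_right _ _)
  have hMnn : 0 ≤ M := le_trans haange (le_max_left _ _)
  set MF : ℝ := max |FA| (max |FB| |FC|) with hMF
  have hFFb : ∀ p : ℝ × ℝ, ‖FF p‖ ≤ MF := by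
    intro p
    simp only [hFF, Real.norm_eq_abs]
    split_ifs
    · exact le_max_left _ _
    · exact le_trans (le_max_left _ _) (le_max_right _ _)
    · exact le_trans (le_max_right _ _) (le_max_right _ _)
  have hHint : Integrable H := by
    rw [hH]
    refine hψti.bdd_mul (c := M) ?_ (Eventually.of_forall ?_)
    · exact (Measurable.ite (measurableSet_lt measurable_const measurable_fst) hQm
        measurable_const).aestronglyMeasurable
    · intro p
      split_ifs with h
      · exact hQb p
      · simpa using hMnn
  -- slice continuity/support of ψt
  have hψt_sliceX : ∀ t : ℝ, Continuous (fun x => ψt (t, x)) :=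
    fun t => hψtc.comp (Continuous.prodMk_right t)
  have hψt_sliceXcs : ∀ t : ℝ, HasCompactSupport (fun x => ψt (t, x)) :=
    fun t => hcs_line (L := fun x => (t, x)) hψtcs continuous_snd (fun x => rfl)
  have hψt_sliceT : ∀ x : ℝ, Continuous (fun t => ψt (t, x)) :=
    fun x => hψtc.comp (continuous_id.prodMk continuous_const)
  have hψt_sliceTcs : ∀ x : ℝ, HasCompactSupport (fun t => ψt (t, x)) :=
    fun x => hcs_line (L := fun t => (t, x)) hψtcs continuous_fst (fun t => rfl)
  -- Fubini swap for H
  have hHp : Integrable H ((volume : Measure ℝ).prod volume) := by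
    rw [← Measure.volume_eq_prod]; exact hHint
  have hswap : (∫ t in Ioi (0:ℝ), ∫ x : ℝ, H (t, x)) = ∫ x : ℝ, ∫ t : ℝ, H (t, x) := by
    have hz : ∀ t ∉ Ioi (0:ℝ), (∫ x : ℝ, H (t, x)) = 0 := by
      intro t ht
      have h0 : ¬ (0:ℝ) < t := by simpa using ht
      simp [hH, h0]
    rw [setIntegral_eq_integral_of_forall_compl_eq_zero hz]
    exact integral_integral_swap (f := fun t x => H (t, x)) hHp
  -- inner t-integral of H
  have hQtxm : ∀ x : ℝ, Measurable (fun t => Q (t, x)) :=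
    fun x => hQm.comp (measurable_id.prodMk measurable_const)
  have hQtxi : ∀ x : ℝ, Integrable (fun t => Q (t, x) * ψt (t, x)) := fun x =>
    ((hψt_sliceT x).integrable_of_hasCompactSupport (hψt_sliceTcs x)).bdd_mul (c := M)
      (hQtxm x).aestronglyMeasurable (Eventually.of_forall fun t => hQb _)
  have hinner : ∀ x : ℝ, (∫ t : ℝ, H (t, x))
      = if x < 0 then -(aa * φ 0 x) else ((cc - bb) * φ (x / v) x - cc * φ 0 x) := by
    intro x
    have h0 : (∫ t : ℝ, H (t, x)) = ∫ t in Ioi (0:ℝ), Q (t, x) * ψt (t, x) := by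
      rw [← setIntegral_eq_integral_of_forall_compl_eq_zero (s := Ioi (0:ℝ)) (fun t ht => by
        have h0 : ¬ (0:ℝ) < t := by simpa using ht
        simp [hH, h0])]
      refine setIntegral_congr_fun measurableSet_Ioi (fun t ht => ?_)
      simp [hH, mem_Ioi.mp ht]
    rw [h0]
    rcases lt_or_ge x 0 with hx | hx
    · rw [if_pos hx]
      have e : ∀ t ∈ Ioi (0:ℝ), Q (t, x) * ψt (t, x) = aa * deriv (fun s => φ s x) t := by
        intro t _
        rw [edt]
        simp [hQ, hx, hψt]
      rw [setIntegral_congr_fun measurableSet_Ioi e, integral_const_mul,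
        (sliceTsupp x).integral_Ioi_deriv_eq (sliceT x) 0]
      ring
    · rw [if_neg (not_lt.mpr hx)]
      have hxv : 0 ≤ x / v := div_nonneg hx hv.le
      rw [← Ioc_union_Ioi_eq_Ioi hxv,
        setIntegral_union (Ioc_disjoint_Ioi le_rfl) measurableSet_Ioi
          (hQtxi x).integrableOn (hQtxi x).integrableOn]
      have e1 : ∀ t ∈ Ioc (0:ℝ) (x / v),
          Q (t, x) * ψt (t, x) = cc * deriv (fun s => φ s x) t := by
        intro t ht
        rw [edt]
        have hx2 : v * (x / v) = x := by field_simp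
        have hvt : ¬ x < v * t := by
          rw [not_lt]
          calc v * t ≤ v * (x / v) := mul_le_mul_of_nonneg_left ht.2 hv.le
          _ = x := hx2
        simp [hQ, not_lt.mpr hx, hvt, hψt]
      have e2 : ∀ t ∈ Ioi (x / v),
          Q (t, x) * ψt (t, x) = bb * deriv (fun s => φ s x) t := by
        intro t ht
        rw [edt]
        have hvt : x < v * t := by
          rw [mul_comm]
          exact (div_lt_iff₀ hv).mp ht
        simp [hQ, not_lt.mpr hx, hvt, hψt]
      rw [setIntegral_congr_fun measurableSet_Ioc e1, setIntegral_congr_fun measurableSet_Ioi e2,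
        integral_const_mul, integral_const_mul, cs_integral_Ioc (sliceT x) hxv,
        (sliceTsupp x).integral_Ioi_deriv_eq (sliceT x) (x / v)]
      ring
  -- basic integrable functions of x
  have hφ0i : Integrable (fun x : ℝ => φ 0 x) :=
    (sliceX 0).continuous.integrable_of_hasCompactSupport (sliceXsupp 0)
  have hdiagc : Continuous (fun x : ℝ => φ (x / v) x) :=
    hΦc.comp ((continuous_id.div_const v).prodMk continuous_id)
  have hdiagcs : HasCompactSupport (fun x : ℝ => φ (x / v) x) :=
    hcs_line (L := fun x => (x / v, x)) hsupp continuous_snd (fun x => rfl)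
  have hdiagi : Integrable (fun x : ℝ => φ (x / v) x) :=
    hdiagc.integrable_of_hasCompactSupport hdiagcs
  -- change of variables
  have hcv : (∫ x in Ioi (0:ℝ), φ (x / v) x) = v * ∫ t in Ioi (0:ℝ), φ t (v * t) := by
    have h := integral_comp_mul_left_Ioi (fun x : ℝ => φ (x / v) x) 0 hv
    rw [mul_zero] at h
    simp only [mul_div_cancel_left₀ _ hv.ne'] at h
    rw [h, smul_eq_mul]
    field_simp
  -- value of the first (Fubini) part
  have hI1 : (∫ t in Ioi (0:ℝ), ∫ x : ℝ, H (t, x))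
      = -(aa * ∫ x in Iio (0:ℝ), φ 0 x)
        + ((cc - bb) * (v * ∫ t in Ioi (0:ℝ), φ t (v * t))
            - cc * ∫ x in Ioi (0:ℝ), φ 0 x) := by
    have hint1 : IntegrableOn
        (fun x : ℝ => if x < 0 then -(aa * φ 0 x) else ((cc - bb) * φ (x / v) x - cc * φ 0 x))
        (Iio (0:ℝ)) := by
      refine ((hφ0i.const_mul aa).neg.integrableOn).congr_fun ?_ measurableSet_Iio
      intro x hx
      simp [mem_Iio.mp hx]
    have hint2 : IntegrableOn
        (fun x : ℝ => if x < 0 then -(aa * φ 0 x) else ((cc - bb) * φ (x / v) x - cc * φ 0 x))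
        (Ici (0:ℝ)) := by
      refine (((hdiagi.const_mul (cc - bb)).sub (hφ0i.const_mul cc)).integrableOn).congr_fun ?_
        measurableSet_Ici
      intro x hx
      simp [not_lt.mpr (mem_Ici.mp hx)]
    rw [hswap]
    calc (∫ x : ℝ, ∫ t : ℝ, H (t, x))
        = ∫ x : ℝ, (if x < 0 then -(aa * φ 0 x)
            else ((cc - bb) * φ (x / v) x - cc * φ 0 x)) := by simp_rw [hinner]
      _ = (∫ x in Iio (0:ℝ), (if x < 0 then -(aa * φ 0 x)
            else ((cc - bb) * φ (x / v) x - cc * φ 0 x)))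
          + ∫ x in Ici (0:ℝ), (if x < 0 then -(aa * φ 0 x)
            else ((cc - bb) * φ (x / v) x - cc * φ 0 x)) :=
        (intervalIntegral.integral_Iio_add_Ici hint1 hint2).symm
      _ = (∫ x in Iio (0:ℝ), -(aa * φ 0 x))
          + ∫ x in Ici (0:ℝ), ((cc - bb) * φ (x / v) x - cc * φ 0 x) := by
        rw [setIntegral_congr_fun measurableSet_Iio (fun x hx => if_pos (mem_Iio.mp hx)),
          setIntegral_congr_fun measurableSet_Ici (fun x hx => if_neg (not_lt.mpr (mem_Ici.mp hx)))]
      _ = -(aa * ∫ x in Iio (0:ℝ), φ 0 x)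
          + ((cc - bb) * (∫ x in Ici (0:ℝ), φ (x / v) x)
              - cc * ∫ x in Ici (0:ℝ), φ 0 x) := by
        rw [integral_neg, integral_const_mul,
          integral_sub ((hdiagi.const_mul (cc - bb)).integrableOn)
            ((hφ0i.const_mul cc).integrableOn),
          integral_const_mul, integral_const_mul]
      _ = _ := by
        rw [integral_Ici_eq_integral_Ioi, integral_Ici_eq_integral_Ioi, hcv]
  -- integrable functions of t
  have hφt0i : Integrable (fun t : ℝ => φ t 0) :=
    (hΦc.comp (continuous_id.prodMk continuous_const)).integrable_of_hasCompactSupport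
      (hcs_line (L := fun t => (t, (0:ℝ))) hsupp continuous_fst (fun t => rfl))
  have hblini : Integrable (fun t : ℝ => φ t (v * t)) :=
    (hΦc.comp (continuous_id.prodMk (continuous_const.mul continuous_id))).integrable_of_hasCompactSupport
      (hcs_line (L := fun t => (t, v * t)) hsupp continuous_fst (fun t => rfl))
  -- the FF part, inner integral
  have hFFi : ∀ t : ℝ, Integrable (fun x => FF (t, x) * deriv (fun y => φ t y) x) := fun t =>
    (((sliceX t).continuous_deriv le_rfl).integrable_of_hasCompactSupport
        (sliceXsupp t).deriv).bdd_mul (c := MF)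
      (hFFm.comp (measurable_const.prodMk measurable_id)).aestronglyMeasurable
      (Eventually.of_forall fun x => hFFb _)
  have hI2inner : ∀ t ∈ Ioi (0:ℝ), (∫ x : ℝ, FF (t, x) * deriv (fun y => φ t y) x)
      = (FA - FB) * φ t 0 + (FB - FC) * φ t (v * t) := by
    intro t ht
    have htpos : (0:ℝ) < t := ht
    have hvt : 0 < v * t := mul_pos hv htpos
    rw [← intervalIntegral.integral_Iio_add_Ici (b := (0:ℝ)) (hFFi t).integrableOn (hFFi t).integrableOn]
    have e1 : ∀ x ∈ Iio (0:ℝ),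
        FF (t, x) * deriv (fun y => φ t y) x = FA * deriv (fun y => φ t y) x := by
      intro x hx
      simp [hFF, mem_Iio.mp hx]
    have e2 : ∀ x ∈ Ioo (0:ℝ) (v * t),
        FF (t, x) * deriv (fun y => φ t y) x = FB * deriv (fun y => φ t y) x := by
      intro x hx
      simp [hFF, not_lt.mpr hx.1.le, hx.2]
    have e3 : ∀ x ∈ Ici (v * t),
        FF (t, x) * deriv (fun y => φ t y) x = FC * deriv (fun y => φ t y) x := by
      intro x hx
      have h1 : ¬ x < 0 := not_lt.mpr (le_trans hvt.le hx)
      have h2 : ¬ x < v * t := not_lt.mpr hx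
      simp [hFF, h1, h2]
    rw [setIntegral_congr_fun measurableSet_Iio e1, integral_const_mul,
      cs_integral_Iio (sliceX t) (sliceXsupp t) 0,
      integral_Ici_eq_integral_Ioi, ← Ioo_union_Ici_eq_Ioi hvt,
      setIntegral_union disj_Ioo_Ici measurableSet_Ici
        (hFFi t).integrableOn (hFFi t).integrableOn,
      setIntegral_congr_fun measurableSet_Ioo e2,
      setIntegral_congr_fun measurableSet_Ici e3,
      integral_const_mul, integral_const_mul,
      cs_integral_Ioo (sliceX t) hvt.le,
      cs_integral_Ici (sliceX t) (sliceXsupp t) (v * t)]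
    ring
  -- integrability of H slices in x
  have hHxi : ∀ t : ℝ, Integrable (fun x => H (t, x)) := by
    intro t
    refine Integrable.bdd_mul (f := fun x : ℝ => (if 0 < t then Q (t, x) else 0)) (c := M)
      ((hψt_sliceX t).integrable_of_hasCompactSupport (hψt_sliceXcs t)) ?_ (Eventually.of_forall fun x => ?_)
    · by_cases h : 0 < t
      · simp only [if_pos h]
        exact (hQm.comp (measurable_const.prodMk measurable_id)).aestronglyMeasurable
      · simp only [if_neg h]
        exact aestronglyMeasurable_const
    · split_ifs with h
      · exact hQb _
      · simpa using hMnn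
  -- decompose the main space-time integral
  have hmain : (∫ t in Ioi (0:ℝ), ∫ x : ℝ,
        (|ρ t x - κ| * deriv (fun s => φ s x) t
          + Real.sign (ρ t x - κ) * (f (ρ t x) - f κ) * deriv (fun y => φ t y) x))
      = (∫ t in Ioi (0:ℝ), ∫ x : ℝ, H (t, x))
        + ∫ t in Ioi (0:ℝ), ((FA - FB) * φ t 0 + (FB - FC) * φ t (v * t)) := by
    have hcomb : Integrable (fun t : ℝ => (FA - FB) * φ t 0 + (FB - FC) * φ t (v * t)) :=
      (hφt0i.const_mul (FA - FB)).add (hblini.const_mul (FB - FC))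
    rw [← integral_add (hHp.integral_prod_left.integrableOn) hcomb.integrableOn]
    refine setIntegral_congr_fun measurableSet_Ioi (fun t ht => ?_)
    have htpos : (0:ℝ) < t := ht
    have e : ∀ x : ℝ, |ρ t x - κ| * deriv (fun s => φ s x) t
        + Real.sign (ρ t x - κ) * (f (ρ t x) - f κ) * deriv (fun y => φ t y) x
        = H (t, x) + FF (t, x) * deriv (fun y => φ t y) x := by
      intro x
      rw [hρ t x htpos]
      congr 1
      · show |(if x < 0 then ρL else if x < v * t then ρmax else ρR) - κ|
            * deriv (fun s => φ s x) t = (if 0 < t then Q (t, x) else 0) * ψt (t, x)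
        rw [if_pos htpos, edt]
        simp only [hQ, hψt]
        split_ifs <;> simp [haa, hbb, hcc]
      · show Real.sign ((if x < 0 then ρL else if x < v * t then ρmax else ρR) - κ)
            * (f (if x < 0 then ρL else if x < v * t then ρmax else ρR) - f κ)
            * deriv (fun y => φ t y) x = FF (t, x) * deriv (fun y => φ t y) x
        simp only [hFF]
        split_ifs <;> simp [hFA, hFB, hFC]
    rw [integral_congr_ae (Filter.Eventually.of_forall e),
      integral_add (hHxi t) (hFFi t), hI2inner t ht]
  -- the initial-datum term
  have hB : (∫ x : ℝ, |ρ₀ x - κ| * φ 0 x)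
      = aa * (∫ x in Iio (0:ℝ), φ 0 x) + cc * ∫ x in Ioi (0:ℝ), φ 0 x := by
    have e : ∀ x : ℝ, |ρ₀ x - κ| * φ 0 x
        = (if x < 0 then aa * φ 0 x else cc * φ 0 x) := by
      intro x
      rw [hρ₀ x]
      split_ifs <;> simp [haa, hcc]
    have hint1 : IntegrableOn (fun x : ℝ => if x < 0 then aa * φ 0 x else cc * φ 0 x)
        (Iio (0:ℝ)) := by
      refine ((hφ0i.const_mul aa).integrableOn).congr_fun ?_ measurableSet_Iio
      intro x hx
      simp [mem_Iio.mp hx]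
    have hint2 : IntegrableOn (fun x : ℝ => if x < 0 then aa * φ 0 x else cc * φ 0 x)
        (Ici (0:ℝ)) := by
      refine ((hφ0i.const_mul cc).integrableOn).congr_fun ?_ measurableSet_Ici
      intro x hx
      simp [not_lt.mpr (mem_Ici.mp hx)]
    rw [integral_congr_ae (Filter.Eventually.of_forall e),
      ← intervalIntegral.integral_Iio_add_Ici hint1 hint2,
      setIntegral_congr_fun measurableSet_Iio (fun x hx => if_pos (mem_Iio.mp hx)),
      setIntegral_congr_fun measurableSet_Ici (fun x hx => if_neg (not_lt.mpr (mem_Ici.mp hx))),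
      integral_const_mul, integral_const_mul, integral_Ici_eq_integral_Ioi]
  -- split the second part
  have hsplit2 : (∫ t in Ioi (0:ℝ), ((FA - FB) * φ t 0 + (FB - FC) * φ t (v * t)))
      = (FA - FB) * (∫ t in Ioi (0:ℝ), φ t 0)
        + (FB - FC) * ∫ t in Ioi (0:ℝ), φ t (v * t) := by
    rw [integral_add (hφt0i.const_mul _).integrableOn (hblini.const_mul _).integrableOn,
      integral_const_mul, integral_const_mul]
  -- finish
  rw [hmain, hI1, hsplit2, hB]
  have h1 : 0 ≤ (FA - FB) * (∫ t in Ioi (0:ℝ), φ t 0) :=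
    mul_nonneg (by linarith) (setIntegral_nonneg measurableSet_Ioi (fun t _ => hpos t 0))
  have h2 : (cc - bb) * (v * ∫ t in Ioi (0:ℝ), φ t (v * t))
      + (FB - FC) * (∫ t in Ioi (0:ℝ), φ t (v * t)) = 0 := by
    linear_combination (∫ t in Ioi (0:ℝ), φ t (v * t)) * hK2
  linarith [h1, h2]
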